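/- Let $(v_j)$ and $(v_\alpha)$ be two strictly decreasing sequences of functions on a set $X$, both converging pointwise to the same function $v$, and suppose each $v_j$ is continuous, $X$ is compact, and the convergence of $(v_\alpha)$ to $v$ is pointwise with $v_j > v$ everywhere. Then there exist subsequences $(v_{j_a})$ and $(v_{\alpha_b})$ that interleave: $\cdots < v_{\alpha_2} < v_{j_2} < v_{\alpha_1} < v_{j_1}$ pointwise on $X$. -/

import Mathlib

/-!
A Dini-type compactness argument: if `f i` decreases pointwise to `v` and `g > v`, the open sets
`{f i < g}` increase and cover the compact space, so one of them is everything, i.e. eventually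
`f i < g` uniformly. Applied alternately with `g = vα b` and `g = vj a`, this picks the next index of
each subsequence in turn.
-/

open Filter Topology

theorem UpperSemicontinuous.isOpen_setOf_lt {X β : Type*} [TopologicalSpace X] [LinearOrder β]
    [DenselyOrdered β] {f g : X → β} (hf : UpperSemicontinuous f) (hg : LowerSemicontinuous g) :
    IsOpen {x | f x < g x} := by
  refine isOpen_iff_mem_nhds.2 fun x hx => ?_
  obtain ⟨c, hfc, hcg⟩ := exists_between hx
  filter_upwards [hf x c hfc, hg x c hcg] with y hfy hgy using hfy.trans hgy

theorem Antitone.eventually_forall_lt_of_tendsto {X ι β : Type*} [TopologicalSpace X]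
    [CompactSpace X] [Preorder ι] [IsDirectedOrder ι] [Nonempty ι] [LinearOrder β]
    [DenselyOrdered β] [TopologicalSpace β] [OrderTopology β] {f : ι → X → β} {v g : X → β}
    (hf : Antitone f) (hfc : ∀ i, UpperSemicontinuous (f i)) (hg : LowerSemicontinuous g)
    (hlim : ∀ x, Tendsto (fun i => f i x) atTop (𝓝 (v x))) (hvg : ∀ x, v x < g x) :
    ∀ᶠ i in atTop, ∀ x, f i x < g x := by
  have hcover : Set.univ ⊆ ⋃ i, {x | f i x < g x} := fun x _ =>
    Set.mem_iUnion.2 ((hlim x).eventually_lt_const (hvg x)).exists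
  have hmono : Monotone fun i => {x | f i x < g x} := fun i j hij x hx =>
    (hf hij x).trans_lt hx
  obtain ⟨i, hi⟩ := isCompact_univ.elim_directed_cover _ (fun i => (hfc i).isOpen_setOf_lt hg)
    hcover hmono.directed_le
  filter_upwards [eventually_ge_atTop i] with j hij x using (hf hij x).trans_lt (hi trivial)

theorem exists_strictMono_interleaving (R S : ℕ → ℕ → Prop)
    (hR : ∀ j, ∀ᶠ a in atTop, R j a) (hS : ∀ a, ∀ᶠ j in atTop, S a j) :
    ∃ a b : ℕ → ℕ, StrictMono a ∧ StrictMono b ∧ (∀ k, R (a k) (b k)) ∧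
      ∀ k, S (b k) (a (k + 1)) := by
  have hR' : ∀ j m, ∃ a, m < a ∧ R j a := fun j m =>
    ((eventually_gt_atTop m).and (hR j)).exists
  have hS' : ∀ a m, ∃ j, m < j ∧ S a j := fun a m =>
    ((eventually_gt_atTop m).and (hS a)).exists
  choose nextA hnextA using hR'
  choose nextJ hnextJ using hS'
  let step : ℕ × ℕ → ℕ × ℕ := fun q => (nextJ q.2 q.1, nextA (nextJ q.2 q.1) q.2)
  let p : ℕ → ℕ × ℕ := fun k => step^[k] (0, nextA 0 0)
  have hp : ∀ k, p (k + 1) = step (p k) := fun k => Function.iterate_succ_apply' _ _ _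
  refine ⟨fun k => (p k).1, fun k => (p k).2, strictMono_nat_of_lt_succ fun k => ?_,
    strictMono_nat_of_lt_succ fun k => ?_, fun k => ?_, fun k => ?_⟩
  · simpa only [hp] using (hnextJ _ _).1
  · simpa only [hp] using (hnextA _ _).1
  · cases k with
    | zero => exact (hnextA 0 0).2
    | succ k => simpa only [hp] using (hnextA _ _).2
  · simpa only [hp] using (hnextJ _ _).2

/-- Two strictly decreasing sequences of continuous functions on a compact space,
both converging pointwise to the same limit `v` and staying strictly above `v`,
admit interleaving subsequences `⋯ < vα (b 1) < vj (a 1) < vα (b 0) < vj (a 0)`. -/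
theorem stmt_0 {X : Type*} [TopologicalSpace X] [CompactSpace X]
    (vj vα : ℕ → X → ℝ) (v : X → ℝ)
    (hcj : ∀ j, Continuous (vj j)) (hcα : ∀ a, Continuous (vα a))
    (hdecj : ∀ j x, vj (j + 1) x < vj j x)
    (hdecα : ∀ a x, vα (a + 1) x < vα a x)
    (hlimj : ∀ x, Tendsto (fun j => vj j x) atTop (𝓝 (v x)))
    (hlimα : ∀ x, Tendsto (fun a => vα a x) atTop (𝓝 (v x)))
    (hgtj : ∀ j x, v x < vj j x)
    (hgtα : ∀ a x, v x < vα a x) :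
    ∃ a b : ℕ → ℕ, StrictMono a ∧ StrictMono b ∧
      (∀ k x, vα (b k) x < vj (a k) x) ∧
      (∀ k x, vj (a (k + 1)) x < vα (b k) x) := by
  have hantij : Antitone vj := antitone_nat_of_succ_le fun j x => (hdecj j x).le
  have hantiα : Antitone vα := antitone_nat_of_succ_le fun a x => (hdecα a x).le
  exact exists_strictMono_interleaving (fun j a => ∀ x, vα a x < vj j x)
    (fun a j => ∀ x, vj j x < vα a x)
    (fun j => hantiα.eventually_forall_lt_of_tendsto (fun a => (hcα a).upperSemicontinuous)
      (hcj j).lowerSemicontinuous hlimα (hgtj j))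
    (fun a => hantij.eventually_forall_lt_of_tendsto (fun j => (hcj j).upperSemicontinuous)
      (hcα a).lowerSemicontinuous hlimj (hgtα a))
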